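/- arXiv:0905.4067 — 7 statements merged into one kernel-verified Lean document; each statement's English description precedes it below -/
import Mathlib

section
/- For bounded linear operators T, R, S on a complex Hilbert space H, one has T*RS + S*R*T ≤ ‖R‖(T*T + S*S) in the operator order. -/
/-!
Expand `0 ≤ star x * x` for `x = ‖r‖ • a - r * b` and use `star r * r ≤ ‖r‖ ^ 2`. This works in
any C⋆-algebra, and `B(H)` with the Loewner order is one.
-/

open ContinuousLinearMap

namespace CStarAlgebra

variable {A : Type*} [CStarAlgebra A] [PartialOrder A] [StarOrderedRing A]

lemma conjugate_star_mul_self_le_norm_sq_smul (r b : A) :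
    star b * star r * r * b ≤ ‖r‖ ^ 2 • (star b * b) := by
  simpa [mul_assoc, Algebra.algebraMap_eq_smul_one] using
    star_left_conjugate_le_conjugate star_mul_le_algebraMap_norm_sq b

lemma star_mul_mul_add_star_mul_star_mul_le (a r b : A) :
    star a * r * b + star b * star r * a ≤ ‖r‖ • (star a * a + star b * b) := by
  rcases eq_or_ne r 0 with rfl | hr
  · simp
  have hpos : 0 < ‖r‖ := norm_pos_iff.mpr hr
  have hsq : star (‖r‖ • a - r * b) * (‖r‖ • a - r * b) =
      ‖r‖ ^ 2 • (star a * a) + star b * star r * r * b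
        - ‖r‖ • (star a * r * b + star b * star r * a) := by
    simp only [star_sub, star_smul, star_mul, star_trivial, sub_mul, mul_sub, smul_mul_assoc,
      mul_smul_comm, mul_assoc]
    module
  have hcross := sub_nonneg.mp (hsq ▸ star_mul_self_nonneg (‖r‖ • a - r * b))
  refine le_of_smul_le_smul_left ?_ hpos
  calc ‖r‖ • (star a * r * b + star b * star r * a)
      ≤ ‖r‖ ^ 2 • (star a * a) + star b * star r * r * b := hcross
    _ ≤ ‖r‖ ^ 2 • (star a * a) + ‖r‖ ^ 2 • (star b * b) :=
      add_le_add_right (conjugate_star_mul_self_le_norm_sq_smul r b) _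
    _ = ‖r‖ • (‖r‖ • (star a * a + star b * b)) := by module

end CStarAlgebra

theorem stmt_1 {H : Type*} [NormedAddCommGroup H] [InnerProductSpace ℂ H]
    [CompleteSpace H] (T R S : H →L[ℂ] H) :
    adjoint T * R * S + adjoint S * adjoint R * T ≤
      ‖R‖ • (adjoint T * T + adjoint S * S) := by
  simpa only [star_eq_adjoint] using CStarAlgebra.star_mul_mul_add_star_mul_star_mul_le T R S
end

section
/- Let X be a Hilbert C*-module over a C*-algebra A, let y₁,…,yₙ ∈ X and a₁,…,aₙ ∈ A. Then ⟨∑ᵢ yᵢaᵢ, ∑ᵢ yᵢaᵢ⟩ ≤ (max_{1≤i≤n} ∑_{j=1}^n ‖⟨yᵢ,yⱼ⟩‖) · ∑ᵢ aᵢ*aᵢ in the order of A. -/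
open scoped RightActions

/-- The Dec 2024 Mathlib `CStarModule` (right module via `SMul Aᵐᵒᵖ E`), restated with its old
meaning, since Mathlib's `CStarModule` now uses a left action. -/
class RightCStarModule (A E : Type*) [NonUnitalSemiring A] [StarRing A] [Module ℂ A]
    [AddCommGroup E] [Module ℂ E] [PartialOrder A] [SMul Aᵐᵒᵖ E] [Norm A] [Norm E]
    extends Inner A E where
  inner_add_right {x} {y} {z} : inner x (y + z) = inner x y + inner x z
  inner_self_nonneg {x} : 0 ≤ inner x x
  inner_self {x} : inner x x = 0 ↔ x = 0
  inner_op_smul_right {a : A} {x y : E} : inner x (y <• a) = inner x y * a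
  inner_smul_right_complex {z : ℂ} {x} {y} : inner x (z • y) = z • inner x y
  star_inner x y : star (inner x y) = inner y x
  norm_eq_sqrt_norm_inner_self x : ‖x‖ = √‖inner x x‖

/-!
With `b i j = ⟪y i, y j⟫`, the left side expands to `∑ i j, star (a i) * b i j * a j`, and the
`(j, i)` term is the adjoint of the `(i, j)` term. Expanding `0 ≤ |‖b‖ c - b d|²` and using
`star d * (star b * b) * d ≤ ‖b‖² • star d * d` bounds each symmetric pair by
`‖b i j‖ • (|a i|² + |a j|²)`. Summing these pair bounds is a Schur test: the weights `‖b i j‖`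
are symmetric and their row sums are at most the maximum in the statement.
-/

theorem sum_sum_le_smul_sum_of_add_le {ι M : Type*} [Fintype ι] [AddCommGroup M] [PartialOrder M]
    [IsOrderedAddMonoid M] [Module ℝ M] [PosSMulMono ℝ M] [SMulPosMono ℝ M]
    (T : ι → ι → M) (w : ι → ι → ℝ) (q : ι → M) (C : ℝ) (hw : ∀ i j, w i j = w j i)
    (hq : ∀ i, 0 ≤ q i) (hT : ∀ i j, T i j + T j i ≤ w i j • (q i + q j))
    (hC : ∀ i, ∑ j, w i j ≤ C) :
    ∑ i, ∑ j, T i j ≤ C • ∑ i, q i := by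
  have hrows : ∑ i, ∑ j, w i j • q j = ∑ i, (∑ j, w i j) • q i := by
    rw [Finset.sum_comm]
    simp only [Finset.sum_smul, hw]
  have hdouble : (2 : ℝ) • ∑ i, ∑ j, T i j ≤ (2 : ℝ) • (C • ∑ i, q i) :=
    calc (2 : ℝ) • ∑ i, ∑ j, T i j = ∑ i, ∑ j, (T i j + T j i) := by
          rw [two_smul]
          nth_rewrite 2 [Finset.sum_comm]
          simp only [Finset.sum_add_distrib]
      _ ≤ ∑ i, ∑ j, w i j • (q i + q j) := by gcongr with i _ j _; exact hT i j
      _ = (2 : ℝ) • ∑ i, (∑ j, w i j) • q i := by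
          simp only [smul_add, Finset.sum_add_distrib, hrows, two_smul, Finset.sum_smul]
      _ ≤ (2 : ℝ) • ∑ i, C • q i := by
          gcongr with i _
          exacts [hq i, hC i]
      _ = (2 : ℝ) • (C • ∑ i, q i) := by rw [← Finset.smul_sum]
  exact (smul_le_smul_iff_of_pos_left two_pos).mp hdouble

namespace RightCStarModule

variable {A E : Type*} [NonUnitalCStarAlgebra A] [PartialOrder A] [AddCommGroup E] [Module ℂ E]
  [SMul Aᵐᵒᵖ E] [Norm E] [RightCStarModule A E]

lemma inner_add_left (x y z : E) : inner A (x + y) z = inner A x z + inner A y z := by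
  rw [← star_inner z, inner_add_right, star_add, star_inner, star_inner]

lemma inner_op_smul_left (a : A) (x y : E) : inner A (x <• a) y = star a * inner A x y := by
  rw [← star_inner y, inner_op_smul_right, star_mul, star_inner]

lemma inner_sum_left {ι : Type*} (s : Finset ι) (f : ι → E) (x : E) :
    inner A (∑ i ∈ s, f i) x = ∑ i ∈ s, inner A (f i) x :=
  map_sum (AddMonoidHom.mk' (fun z : E => (inner A z x : A)) (inner_add_left · · x)) f s

lemma inner_sum_right {ι : Type*} (s : Finset ι) (x : E) (f : ι → E) :
    inner A x (∑ i ∈ s, f i) = ∑ i ∈ s, inner A x (f i) :=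
  map_sum (AddMonoidHom.mk' (fun z : E => (inner A x z : A)) fun _ _ => inner_add_right) f s

lemma inner_sum_op_smul_sum_op_smul {ι : Type*} (s : Finset ι) (y : ι → E) (a : ι → A) :
    inner A (∑ i ∈ s, y i <• a i) (∑ i ∈ s, y i <• a i) =
      ∑ i ∈ s, ∑ j ∈ s, star (a i) * inner A (y i) (y j) * a j := by
  rw [inner_sum_left]
  refine Finset.sum_congr rfl fun i _ => ?_
  rw [inner_op_smul_left, inner_sum_right, Finset.mul_sum]
  refine Finset.sum_congr rfl fun j _ => ?_
  rw [inner_op_smul_right, mul_assoc]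

lemma norm_inner_symm (x y : E) : ‖(inner A x y : A)‖ = ‖(inner A y x : A)‖ := by
  rw [← star_inner y, norm_star]

end RightCStarModule

lemma star_mul_mul_add_star_le_norm_smul {A : Type*} [NonUnitalCStarAlgebra A] [PartialOrder A]
    [StarOrderedRing A] (b c d : A) :
    star c * b * d + star (star c * b * d) ≤ ‖b‖ • (star c * c + star d * d) := by
  rcases eq_or_ne b 0 with rfl | hb
  · simp
  set t := ‖b‖
  have ht : 0 < t := norm_pos_iff.mpr hb
  have hsq : 0 ≤ star (t • c - b * d) * (t • c - b * d) := star_mul_self_nonneg _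
  have hexpand : star (t • c - b * d) * (t • c - b * d) =
      (t * t) • (star c * c) + star d * (star b * b) * d -
        t • (star c * b * d + star (star c * b * d)) := by
    simp only [star_sub, star_smul, star_mul, star_star, smul_mul_assoc, mul_smul_comm, sub_mul,
      mul_sub, star_trivial, mul_assoc]
    simp only [smul_add, smul_sub, smul_smul]
    abel
  have hconj : star d * (star b * b) * d ≤ (t * t) • (star d * d) := by
    simpa only [CStarRing.norm_star_mul_self] using
      CStarAlgebra.star_left_conjugate_le_norm_smul (a := d) (b := star b * b)
  have hscaled : t • (star c * b * d + star (star c * b * d)) ≤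
      t • (t • (star c * c + star d * d)) := by
    rw [hexpand, sub_nonneg] at hsq
    calc _ ≤ (t * t) • (star c * c) + star d * (star b * b) * d := hsq
      _ ≤ (t * t) • (star c * c) + (t * t) • (star d * d) := by gcongr
      _ = t • (t • (star c * c + star d * d)) := by rw [smul_smul, smul_add]
  exact (smul_le_smul_iff_of_pos_left ht).mp hscaled

open RightCStarModule in
theorem stmt_4 {A E : Type*} [NonUnitalCStarAlgebra A] [PartialOrder A] [StarOrderedRing A]
    [AddCommGroup E] [Module ℂ E] [SMul Aᵐᵒᵖ E] [Norm E] [RightCStarModule A E]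
    {n : ℕ} (hn : 0 < n) (y : Fin n → E) (a : Fin n → A) :
    (inner A (∑ i, (y i <• a i)) (∑ i, (y i <• a i)) : A) ≤
      (Finset.univ.sup' ⟨⟨0, hn⟩, Finset.mem_univ _⟩
        fun i => ∑ j, ‖(inner A (y i) (y j) : A)‖) • ∑ i, star (a i) * a i := by
  rw [inner_sum_op_smul_sum_op_smul]
  refine sum_sum_le_smul_sum_of_add_le _ (fun i j => ‖(inner A (y i) (y j) : A)‖) _ _
    (fun i j => norm_inner_symm (y i) (y j)) (fun i => star_mul_self_nonneg (a i))
    (fun i j => ?_) (fun i => Finset.le_sup' (fun i => ∑ j, ‖(inner A (y i) (y j) : A)‖)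
      (Finset.mem_univ i))
  have hswap : star (a j) * inner A (y j) (y i) * a i =
      star (star (a i) * inner A (y i) (y j) * a j) := by
    rw [star_mul, star_mul, star_star, star_inner, mul_assoc]
  rw [hswap]
  exact star_mul_mul_add_star_le_norm_smul _ _ _
end

section
/- Let X be a Hilbert C*-module over a C*-algebra A, x, y₁,…,yₙ ∈ X. Then (∑ᵢ ⟨yᵢ,x⟩*⟨yᵢ,x⟩)² ≤ ‖∑ᵢ ⟨yᵢ,x⟩*⟨yᵢ,x⟩‖ · (max_{1≤i≤n} ∑_{j=1}^n ‖⟨yᵢ,yⱼ⟩‖) · ⟨x,x⟩, as an inequality of positive elements of A. -/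
/-
With `aᵢ = ⟪yᵢ, x⟫` and `z = ∑ᵢ yᵢ <• aᵢ` one has `⟪x, z⟫ = ⟪z, x⟫ = T := ∑ᵢ aᵢ⋆ aᵢ`, so the
Cauchy–Schwarz inequality `⟪x, z⟫ ⟪z, x⟫ ≤ ‖z‖² ⟪x, x⟫` gives `T² ≤ ‖z‖² ⟪x, x⟫`. Moreover
`‖z‖² = ‖∑ᵢⱼ aᵢ⋆ ⟪yᵢ, yⱼ⟫ aⱼ‖`, and a Schur test bounds this positive sum by `M • T`, hence its
norm by `M ‖T‖`, where `M` is the largest row sum of the norms `‖⟪yᵢ, yⱼ⟫‖`: pair the `(i, j)` and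
`(j, i)` terms and use `u⋆ c v + v⋆ c⋆ u ≤ ‖c‖ (u⋆ u + v⋆ v)`.
-/

open scoped RightActions

/-- The Hilbert C⋆-module class as it stood in Mathlib (Dec 2024): right `A`-action via `Aᵐᵒᵖ`,
inner product linear in the second variable with `⟪x, y <• a⟫ = ⟪x, y⟫ * a`. -/
class CStarModuleRight (A : outParam <| Type*) (E : Type*) [NonUnitalSemiring A] [StarRing A]
    [Module ℂ A] [AddCommGroup E] [Module ℂ E] [PartialOrder A] [SMul Aᵐᵒᵖ E] [Norm A] [Norm E]
    extends Inner A E where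
  inner_add_right {x} {y} {z} : inner x (y + z) = inner x y + inner x z
  inner_self_nonneg {x} : 0 ≤ inner x x
  inner_self {x} : inner x x = 0 ↔ x = 0
  inner_op_smul_right {a : A} {x y : E} : inner x (y <• a) = inner x y * a
  inner_smul_right_complex {z : ℂ} {x} {y} : inner x (z • y) = z • inner x y
  star_inner x y : star (inner x y) = inner y x
  norm_eq_sqrt_norm_inner_self x : ‖x‖ = √‖inner x x‖

section CStarAlgebra

variable {A : Type*} [NonUnitalCStarAlgebra A] [PartialOrder A] [StarOrderedRing A]

lemma star_mul_mul_add_star_mul_mul_le (u v c : A) :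
    star u * (c * v) + star v * (star c * u) ≤ ‖c‖ • (star u * u + star v * v) := by
  rcases eq_or_ne c 0 with rfl | hc
  · simp
  set t := ‖c‖
  have ht : 0 < t := norm_pos_iff.mpr hc
  have hw : 0 ≤ star (t • u - c * v) * (t • u - c * v) := star_mul_self_nonneg _
  have hconj : star v * (star c * c) * v ≤ (t * t) • (star v * v) := by
    have := CStarAlgebra.star_left_conjugate_le_norm_smul (a := v) (.star_mul_self c)
    rwa [CStarRing.norm_star_mul_self] at this
  have : 0 ≤ t • (t • (star u * u + star v * v) - (star u * (c * v) + star v * (star c * u))) := by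
    convert add_nonneg hw (sub_nonneg.mpr hconj) using 1
    simp only [star_sub, star_smul, star_mul, star_trivial, sub_mul, mul_sub, smul_mul_assoc,
      mul_smul_comm, smul_sub, smul_add, smul_smul, mul_assoc]
    abel
  rw [← sub_nonneg]
  exact (smul_nonneg_iff_nonneg_of_pos_left ht).mp this

lemma sum_star_mul_mul_le_smul {ι : Type*} [Fintype ι] (a : ι → A) (b : ι → ι → A)
    (hb : ∀ i j, star (b i j) = b j i) {M : ℝ} (hM : ∀ i, ∑ j, ‖b i j‖ ≤ M) :
    ∑ i, ∑ j, star (a i) * (b i j * a j) ≤ M • ∑ i, star (a i) * a i := by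
  set S := ∑ i, ∑ j, star (a i) * (b i j * a j)
  have hS : S = ∑ i, ∑ j, star (a j) * (star (b i j) * a i) := by
    simp only [hb]
    exact Finset.sum_comm
  have hnorm : ∑ i, ∑ j, ‖b i j‖ • (star (a j) * a j) =
      ∑ i, ∑ j, ‖b i j‖ • (star (a i) * a i) := by
    rw [Finset.sum_comm]
    refine Finset.sum_congr rfl fun i _ => Finset.sum_congr rfl fun j _ => ?_
    rw [← hb, norm_star]
  have : (2 : ℝ) • S ≤ (2 : ℝ) • M • ∑ i, star (a i) * a i :=
    calc (2 : ℝ) • S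
        = ∑ i, ∑ j, (star (a i) * (b i j * a j) + star (a j) * (star (b i j) * a i)) := by
          rw [two_smul]
          nth_rw 2 [hS]
          simp only [S, ← Finset.sum_add_distrib]
      _ ≤ ∑ i, ∑ j, ‖b i j‖ • (star (a i) * a i + star (a j) * a j) :=
          Finset.sum_le_sum fun i _ => Finset.sum_le_sum fun j _ =>
            star_mul_mul_add_star_mul_mul_le (a i) (a j) (b i j)
      _ = (2 : ℝ) • ∑ i, (∑ j, ‖b i j‖) • (star (a i) * a i) := by
          simp only [smul_add, Finset.sum_add_distrib, hnorm, two_smul, Finset.sum_smul]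
      _ ≤ (2 : ℝ) • M • ∑ i, star (a i) * a i := by
          refine smul_le_smul_of_nonneg_left ?_ zero_le_two
          rw [Finset.smul_sum]
          exact Finset.sum_le_sum fun i _ =>
            smul_le_smul_of_nonneg_right (hM i) (star_mul_self_nonneg (a i))
  exact (smul_le_smul_iff_of_pos_left two_pos).mp this

end CStarAlgebra

namespace CStarModuleRight

variable {A E : Type*} [NonUnitalCStarAlgebra A] [PartialOrder A] [AddCommGroup E] [Module ℂ E]
  [SMul Aᵐᵒᵖ E] [Norm E] [CStarModuleRight A E]

def innerRight (x : E) : E →ₗ[ℂ] A where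
  toFun := inner A x
  map_add' _ _ := inner_add_right
  map_smul' _ _ := inner_smul_right_complex

lemma inner_zero_right (x : E) : inner A x (0 : E) = 0 :=
  (innerRight x).map_zero

lemma inner_zero_left (x : E) : inner A (0 : E) x = 0 := by
  rw [← star_inner, inner_zero_right, star_zero]

lemma inner_sub_right (x y z : E) : inner A x (y - z) = inner A x y - inner A x z :=
  (innerRight x).map_sub y z

lemma inner_sub_left (x y z : E) : inner A (x - y) z = inner A x z - inner A y z := by
  rw [← star_inner, inner_sub_right, star_sub, star_inner, star_inner]

lemma inner_sum_right {ι : Type*} (s : Finset ι) (x : E) (y : ι → E) :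
    inner A x (∑ i ∈ s, y i) = ∑ i ∈ s, inner A x (y i) :=
  map_sum (innerRight x) y s

lemma inner_sum_left {ι : Type*} (s : Finset ι) (x : ι → E) (y : E) :
    inner A (∑ i ∈ s, x i) y = ∑ i ∈ s, inner A (x i) y := by
  simp only [← star_inner y, inner_sum_right, star_sum]

lemma inner_smul_right_real (r : ℝ) (x y : E) : inner A x (r • y) = r • inner A x y :=
  ((innerRight x).restrictScalars ℝ).map_smul r y

lemma inner_smul_left_real (r : ℝ) (x y : E) : inner A (r • x) y = r • inner A x y := by
  rw [← star_inner, inner_smul_right_real, star_smul, star_trivial, star_inner]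

lemma inner_op_smul_left (a : A) (x y : E) : inner A (x <• a) y = star a * inner A x y := by
  rw [← star_inner, inner_op_smul_right, star_mul, star_inner]

lemma inner_sum_op_smul_left {ι : Type*} (s : Finset ι) (y : ι → E) (a : ι → A) (x : E) :
    inner A (∑ i ∈ s, y i <• a i) x = ∑ i ∈ s, star (a i) * inner A (y i) x := by
  simp only [inner_sum_left, inner_op_smul_left]

lemma inner_sum_op_smul_self {ι : Type*} (s : Finset ι) (y : ι → E) (a : ι → A) :
    inner A (∑ i ∈ s, y i <• a i) (∑ j ∈ s, y j <• a j) =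
      ∑ i ∈ s, ∑ j ∈ s, star (a i) * (inner A (y i) (y j) * a j) := by
  rw [inner_sum_op_smul_left]
  refine Finset.sum_congr rfl fun i _ => ?_
  simp only [inner_sum_right, inner_op_smul_right, Finset.mul_sum]

lemma norm_sq_eq_norm_inner_self (x : E) : ‖x‖ ^ 2 = ‖inner A x x‖ := by
  rw [norm_eq_sqrt_norm_inner_self x, Real.sq_sqrt (norm_nonneg _)]

variable [StarOrderedRing A]

lemma inner_mul_inner_swap_le (x y : E) :
    inner A y x * inner A x y ≤ ‖x‖ ^ 2 • inner A y y := by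
  rcases eq_or_ne x 0 with rfl | hx
  · simpa [inner_zero_left, inner_zero_right] using
      smul_nonneg (sq_nonneg ‖(0 : E)‖) inner_self_nonneg
  set r := ‖x‖ ^ 2 with hr_def
  set a := inner A x y with ha
  have hr : 0 < r := by
    rw [hr_def, norm_sq_eq_norm_inner_self x]
    exact norm_pos_iff.mpr (inner_self.not.mpr hx)
  have hyx : inner A y x = star a := (star_inner x y).symm
  have hw : 0 ≤ inner A (x <• a - r • y) (x <• a - r • y) := inner_self_nonneg
  have hconj : star a * inner A x x * a ≤ r • (star a * a) := by
    rw [hr_def, norm_sq_eq_norm_inner_self]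
    exact CStarAlgebra.star_left_conjugate_le_norm_smul (star_inner x x)
  have : 0 ≤ r • (r • inner A y y - star a * a) := by
    convert add_nonneg hw (sub_nonneg.mpr hconj) using 1
    simp only [inner_sub_left, inner_sub_right, inner_op_smul_left, inner_op_smul_right,
      inner_smul_left_real, inner_smul_right_real, hyx, ← ha, smul_sub, smul_smul,
      smul_mul_assoc, sub_mul, mul_assoc]
    abel
  rw [hyx, ← sub_nonneg]
  exact (smul_nonneg_iff_nonneg_of_pos_left hr).mp this

end CStarModuleRight

open CStarModuleRight Finset

theorem stmt_5 {A E : Type*} [NonUnitalCStarAlgebra A] [PartialOrder A] [StarOrderedRing A]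
    [AddCommGroup E] [Module ℂ E] [SMul Aᵐᵒᵖ E] [Norm E] [CStarModuleRight A E]
    {n : ℕ} (hn : 0 < n) (x : E) (y : Fin n → E) :
    (∑ i, star (inner A (y i) x) * (inner A (y i) x)) *
        (∑ i, star (inner A (y i) x) * (inner A (y i) x)) ≤
      (‖∑ i, star (inner A (y i) x) * (inner A (y i) x)‖ *
        Finset.univ.sup' ⟨⟨0, hn⟩, Finset.mem_univ _⟩
          fun i => ∑ j, ‖(inner A (y i) (y j))‖) • (inner A x x) := by
  set a : Fin n → A := fun i => inner A (y i) x
  set T := ∑ i, star (a i) * a i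
  set M := univ.sup' ⟨⟨0, hn⟩, mem_univ _⟩ fun i => ∑ j, ‖inner A (y i) (y j)‖
  set z := ∑ i, y i <• a i
  have hzx : inner A z x = T := inner_sum_op_smul_left _ _ _ _
  have hxz : inner A x z = T := by
    rw [← star_inner, hzx]
    simp only [T, star_sum, star_mul, star_star]
  have hM : ∀ i, ∑ j, ‖inner A (y i) (y j)‖ ≤ M := fun i =>
    le_sup' (fun i => ∑ j, ‖inner A (y i) (y j)‖) (mem_univ i)
  have hM_nonneg : 0 ≤ M := (sum_nonneg fun j _ => norm_nonneg _).trans (hM ⟨0, hn⟩)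
  have hzz : inner A z z ≤ M • T := by
    rw [inner_sum_op_smul_self]
    exact sum_star_mul_mul_le_smul a _ (fun i j => star_inner _ _) hM
  have hz : ‖z‖ ^ 2 ≤ ‖T‖ * M :=
    calc ‖z‖ ^ 2 = ‖inner A z z‖ := norm_sq_eq_norm_inner_self z
      _ ≤ ‖M • T‖ := CStarAlgebra.norm_le_norm_of_nonneg_of_le inner_self_nonneg hzz
      _ = ‖T‖ * M := by rw [norm_smul, Real.norm_of_nonneg hM_nonneg, mul_comm]
  calc T * T = inner A x z * inner A z x := by rw [hxz, hzx]
    _ ≤ ‖z‖ ^ 2 • inner A x x := inner_mul_inner_swap_le z x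
    _ ≤ (‖T‖ * M) • inner A x x := smul_le_smul_of_nonneg_right hz inner_self_nonneg
end

section
/- Let T be an invertible bounded operator on a Hilbert space H and S₁, S₂ ∈ B(H). Then (TS₁ + (T*)⁻¹S₂)*(TS₁ + (T*)⁻¹S₂) ≤ [1 + max(‖T‖², ‖T⁻¹‖²)] · (S₁*S₁ + S₂*S₂) in the Loewner order. -/
/-!
Expanding `R = T S₁ + (Tinv)* S₂`, the identity `Tinv T = 1` collapses the cross terms of `R* R`
to `S₁* S₂ + S₂* S₁`, which is at most `S₁* S₁ + S₂* S₂` because `(S₁ - S₂)* (S₁ - S₂) ≥ 0`.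
The diagonal terms are conjugates of `T* T ≤ ‖T‖²` and `Tinv Tinv* ≤ ‖Tinv‖²`.
-/

open ContinuousLinearMap

theorem star_mul_add_star_mul_le {R : Type*} [Ring R] [PartialOrder R] [StarRing R]
    [StarOrderedRing R] (a b : R) :
    star a * b + star b * a ≤ star a * a + star b * b := by
  have h := star_mul_self_nonneg (a - b)
  rw [star_sub, sub_mul, mul_sub, mul_sub] at h
  rw [← sub_nonneg]
  convert h using 1
  abel

theorem star_add_mul_add_eq_of_mul_eq_one {R : Type*} [Ring R] [StarRing R] {s t : R}
    (h : s * t = 1) (a b : R) :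
    star (t * a + star s * b) * (t * a + star s * b) =
      star a * (star t * t) * a + (star a * b + star b * a) + star b * (s * star s) * b := by
  have h' : star t * star s = 1 := by rw [← star_mul, h, star_one]
  simp only [star_add, star_mul, star_star, add_mul, mul_add, mul_assoc]
  rw [← mul_assoc (star t) (star s) b, h', ← mul_assoc s t a, h, one_mul, one_mul]
  abel

section CStarAlgebra

variable {A : Type*} [CStarAlgebra A] [PartialOrder A] [StarOrderedRing A]

theorem star_conj_star_mul_self_le (t a : A) :
    star a * (star t * t) * a ≤ ‖t‖ ^ 2 • (star a * a) := by
  simpa [CStarRing.norm_star_mul_self, sq] using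
    CStarAlgebra.star_left_conjugate_le_norm_smul (a := a) (b := star t * t)

theorem star_add_mul_add_le_of_mul_eq_one {s t : A} (h : s * t = 1) (a b : A) :
    star (t * a + star s * b) * (t * a + star s * b) ≤
      (1 + max (‖t‖ ^ 2) (‖s‖ ^ 2)) • (star a * a + star b * b) := by
  set M := max (‖t‖ ^ 2) (‖s‖ ^ 2)
  calc star (t * a + star s * b) * (t * a + star s * b)
      = star a * (star t * t) * a + (star a * b + star b * a) + star b * (s * star s) * b :=
        star_add_mul_add_eq_of_mul_eq_one h a b
    _ ≤ ‖t‖ ^ 2 • (star a * a) + (star a * a + star b * b) + ‖s‖ ^ 2 • (star b * b) := by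
        grw [star_conj_star_mul_self_le, star_mul_add_star_mul_le]
        simpa using star_conj_star_mul_self_le (star s) b
    _ ≤ M • (star a * a) + (star a * a + star b * b) + M • (star b * b) := by
        gcongr
        exacts [star_mul_self_nonneg a, le_max_left _ _, star_mul_self_nonneg b, le_max_right _ _]
    _ = (1 + M) • (star a * a + star b * b) := by
        rw [add_smul, one_smul, smul_add]
        abel

end CStarAlgebra

theorem stmt_7_general {H : Type*} [NormedAddCommGroup H] [InnerProductSpace ℂ H]
    [CompleteSpace H] (T Tinv S₁ S₂ : H →L[ℂ] H)
    (h₂ : Tinv * T = 1) :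
    adjoint (T * S₁ + adjoint Tinv * S₂) * (T * S₁ + adjoint Tinv * S₂) ≤
      (1 + max (‖T‖ ^ 2) (‖Tinv‖ ^ 2)) • (adjoint S₁ * S₁ + adjoint S₂ * S₂) := by
  simpa only [← star_eq_adjoint] using star_add_mul_add_le_of_mul_eq_one h₂ S₁ S₂

theorem stmt_7 {H : Type*} [NormedAddCommGroup H] [InnerProductSpace ℂ H]
    [CompleteSpace H] (T Tinv S₁ S₂ : H →L[ℂ] H)
    (h₁ : T * Tinv = 1) (h₂ : Tinv * T = 1) :
    adjoint (T * S₁ + adjoint Tinv * S₂) * (T * S₁ + adjoint Tinv * S₂) ≤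
      (1 + max (‖T‖ ^ 2) (‖Tinv‖ ^ 2)) • (adjoint S₁ * S₁ + adjoint S₂ * S₂) :=
  stmt_7_general T Tinv S₁ S₂ h₂
end

section
/- Let X be a Hilbert C*-module over a C*-algebra A, x, y₁,…,yₙ ∈ X and a₁,…,aₙ ∈ A. Then (∑ᵢ aᵢ⟨yᵢ,x⟩)*(∑ᵢ aᵢ⟨yᵢ,x⟩) ≤ (∑ᵢ ‖aᵢ‖²) · [max_{1≤i≤n} ‖yᵢ‖² + (∑_{i≠j} ‖⟨yᵢ,yⱼ⟩‖²)^{1/2}] · ⟨x,x⟩, as an inequality of positive elements of A. -/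
open scoped RightActions

/-- The Hilbert C⋆-module class as Mathlib defined it in December 2024 (right `A`-action through
`Aᵐᵒᵖ`); Mathlib's current `CStarModule` uses a left action and has another meaning. -/
class CStarModuleOld (A E : Type*) [NonUnitalSemiring A] [StarRing A]
    [Module ℂ A] [AddCommGroup E] [Module ℂ E] [PartialOrder A] [SMul Aᵐᵒᵖ E] [Norm A] [Norm E]
    extends Inner A E where
  inner_add_right {x} {y} {z} : inner x (y + z) = inner x y + inner x z
  inner_self_nonneg {x} : 0 ≤ inner x x
  inner_self {x} : inner x x = 0 ↔ x = 0
  inner_op_smul_right {a : A} {x y : E} : inner x (y <• a) = inner x y * a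
  inner_smul_right_complex {z : ℂ} {x} {y} : inner x (z • y) = z • inner x y
  star_inner x y : star (inner x y) = inner y x
  norm_eq_sqrt_norm_inner_self x : ‖x‖ = Real.sqrt ‖inner x x‖

/-!
Put `z = ∑ᵢ yᵢ aᵢ⋆`, so that `⟨z, x⟩ = ∑ᵢ aᵢ ⟨yᵢ, x⟩`. The Cauchy–Schwarz inequality of Hilbert
C⋆-modules bounds the left-hand side by `‖z‖² ⟨x, x⟩`, and `‖z‖² = ‖∑ᵢⱼ aᵢ ⟨yᵢ, yⱼ⟩ aⱼ⋆‖`. The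
diagonal terms contribute at most `(∑ᵢ ‖aᵢ‖²) maxᵢ ‖yᵢ‖²`, the off-diagonal ones at most
`∑_{i ≠ j} ‖aᵢ‖ ‖aⱼ‖ ‖⟨yᵢ, yⱼ⟩‖`, which the Cauchy–Schwarz inequality in `ℝ^(n × n)` bounds by
`(∑ᵢ ‖aᵢ‖²) (∑_{i ≠ j} ‖⟨yᵢ, yⱼ⟩‖²)^{1/2}`.
-/

open Finset

section NormedStarRing

variable {ι A : Type*} [Fintype ι] [NonUnitalNormedRing A] [StarRing A] [NormedStarGroup A]

theorem Real.sum_sum_mul_mul_le (u : ι → ℝ) (c : ι → ι → ℝ) :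
    ∑ i, ∑ j, u i * u j * c i j ≤ (∑ i, u i ^ 2) * √(∑ i, ∑ j, c i j ^ 2) := by
  have h := Real.sum_mul_le_sqrt_mul_sqrt univ (fun p : ι × ι => u p.1 * u p.2)
    (fun p => c p.1 p.2)
  simp only [← univ_product_univ, sum_product, mul_pow, ← mul_sum, ← sum_mul] at h
  rwa [Real.sqrt_mul_self (sum_nonneg fun i _ => sq_nonneg (u i))] at h

theorem norm_sum_mul_mul_star_le (a b : ι → A) {M : ℝ} (hb : ∀ i, ‖b i‖ ≤ M) :
    ‖∑ i, a i * b i * star (a i)‖ ≤ (∑ i, ‖a i‖ ^ 2) * M := by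
  rw [sum_mul]
  refine (norm_sum_le _ _).trans (sum_le_sum fun i _ => ?_)
  calc ‖a i * b i * star (a i)‖ ≤ ‖a i‖ * ‖b i‖ * ‖a i‖ := by
        simpa only [norm_star] using norm_mul₃_le (a := a i) (b := b i) (c := star (a i))
    _ = ‖a i‖ ^ 2 * ‖b i‖ := by ring
    _ ≤ ‖a i‖ ^ 2 * M := by gcongr; exact hb i

theorem norm_sum_sum_mul_mul_star_le (a : ι → A) (b : ι → ι → A) :
    ‖∑ i, ∑ j, a i * b i j * star (a j)‖ ≤ (∑ i, ‖a i‖ ^ 2) * √(∑ i, ∑ j, ‖b i j‖ ^ 2) := by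
  calc ‖∑ i, ∑ j, a i * b i j * star (a j)‖ ≤ ∑ i, ∑ j, ‖a i‖ * ‖a j‖ * ‖b i j‖ := by
        refine (norm_sum_le _ _).trans (sum_le_sum fun i _ => ?_)
        refine (norm_sum_le _ _).trans (sum_le_sum fun j _ => ?_)
        calc ‖a i * b i j * star (a j)‖ ≤ ‖a i‖ * ‖b i j‖ * ‖a j‖ := by
              simpa only [norm_star] using norm_mul₃_le (a := a i) (b := b i j) (c := star (a j))
          _ = ‖a i‖ * ‖a j‖ * ‖b i j‖ := by ring
    _ ≤ _ := Real.sum_sum_mul_mul_le _ _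

theorem Fintype.sum_sum_eq_sum_diag_add_sum_sum_ite {M : Type*} [AddCommMonoid M] [DecidableEq ι]
    (f : ι → ι → M) :
    ∑ i, ∑ j, f i j = ∑ i, f i i + ∑ i, ∑ j, if i = j then 0 else f i j := by
  rw [← sum_add_distrib]
  refine Finset.sum_congr rfl fun i _ => ?_
  rw [← sum_ite_eq i (f i), ← sum_add_distrib]
  exact Finset.sum_congr rfl fun j _ => by split_ifs <;> simp

theorem norm_sum_sum_mul_mul_star_le_of_diag_le [DecidableEq ι] (a : ι → A) (b : ι → ι → A) {M : ℝ}
    (hb : ∀ i, ‖b i i‖ ≤ M) :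
    ‖∑ i, ∑ j, a i * b i j * star (a j)‖ ≤
      (∑ i, ‖a i‖ ^ 2) * (M + √(∑ i, ∑ j, if i = j then 0 else ‖b i j‖ ^ 2)) := by
  have hoff := norm_sum_sum_mul_mul_star_le a fun i j => if i = j then 0 else b i j
  simp only [mul_ite, ite_mul, mul_zero, zero_mul, apply_ite (‖·‖ ^ 2), norm_zero,
    zero_pow two_ne_zero] at hoff
  rw [Fintype.sum_sum_eq_sum_diag_add_sum_sum_ite, mul_add]
  exact (norm_add_le _ _).trans (add_le_add (norm_sum_mul_mul_star_le a _ hb) hoff)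

end NormedStarRing

namespace CStarModuleOld

variable {A E : Type*} [NonUnitalCStarAlgebra A] [PartialOrder A]
  [AddCommGroup E] [Module ℂ E] [SMul Aᵐᵒᵖ E] [Norm E] [CStarModuleOld A E]

theorem inner_add_left {x y z : E} : inner A (x + y) z = inner A x z + inner A y z := by
  rw [← star_inner (A := A) z, inner_add_right, star_add, star_inner, star_inner]

variable (A) in
def innerRight (x : E) : E →+ A :=
  AddMonoidHom.mk' (inner A x) fun _ _ => inner_add_right

variable (A) in
def innerLeft (y : E) : E →+ A :=
  AddMonoidHom.mk' (fun x => inner A x y) fun _ _ => inner_add_left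

theorem inner_zero_left {y : E} : inner A (0 : E) y = 0 :=
  map_zero (innerLeft A y)

theorem inner_sub_left {x y z : E} : inner A (x - y) z = inner A x z - inner A y z :=
  map_sub (innerLeft A z) x y

theorem inner_sub_right {x y z : E} : inner A x (y - z) = inner A x y - inner A x z :=
  map_sub (innerRight A x) y z

theorem inner_sum_left {ι : Type*} {s : Finset ι} {x : ι → E} {y : E} :
    inner A (∑ i ∈ s, x i) y = ∑ i ∈ s, inner A (x i) y :=
  map_sum (innerLeft A y) x s

theorem inner_sum_right {ι : Type*} {s : Finset ι} {x : E} {y : ι → E} :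
    inner A x (∑ i ∈ s, y i) = ∑ i ∈ s, inner A x (y i) :=
  map_sum (innerRight A x) y s

theorem inner_op_smul_left {a : A} {x y : E} : inner A (x <• a) y = star a * inner A x y := by
  rw [← star_inner (A := A) y, inner_op_smul_right, star_mul, star_inner]

theorem inner_real_smul_left {r : ℝ} {x y : E} : inner A ((r : ℂ) • x) y = r • inner A x y := by
  rw [← star_inner (A := A) y, inner_smul_right_complex, star_smul, star_inner,
    Complex.star_def, Complex.conj_ofReal, Complex.coe_smul]

theorem inner_real_smul_right {r : ℝ} {x y : E} : inner A x ((r : ℂ) • y) = r • inner A x y := by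
  rw [inner_smul_right_complex, Complex.coe_smul]

variable (A) in
theorem norm_sq_eq_norm_inner_self (x : E) : ‖x‖ ^ 2 = ‖inner A x x‖ := by
  rw [norm_eq_sqrt_norm_inner_self (A := A) x, Real.sq_sqrt (norm_nonneg _)]

theorem star_inner_mul_inner_le [StarOrderedRing A] {x y : E} :
    star (inner A x y) * inner A x y ≤ ‖x‖ ^ 2 • inner A y y := by
  rcases eq_or_ne x 0 with rfl | hx
  · simpa [inner_zero_left] using smul_nonneg (sq_nonneg _) inner_self_nonneg
  have hr : 0 < ‖x‖ ^ 2 := by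
    rw [norm_sq_eq_norm_inner_self A]
    exact norm_pos_iff.2 fun h => hx (inner_self.1 h)
  -- expand `0 ≤ ⟪w, w⟫` for `w = x <• c - ‖x‖² y` with `c = ⟪x, y⟫`
  have hw : 0 ≤ star (inner A x y) * inner A x x * inner A x y
      - ‖x‖ ^ 2 • (star (inner A x y) * inner A x y)
      - ‖x‖ ^ 2 • (star (inner A x y) * inner A x y) + ‖x‖ ^ 2 • ‖x‖ ^ 2 • inner A y y := by
    convert inner_self_nonneg (A := A) (x := x <• inner A x y - ((‖x‖ ^ 2 : ℝ) : ℂ) • y) using 1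
    simp only [inner_sub_left, inner_sub_right, inner_op_smul_left, inner_op_smul_right,
      inner_real_smul_left, inner_real_smul_right, smul_sub, sub_mul, smul_mul_assoc, mul_assoc,
      ← star_inner (A := A) x y]
    abel
  have hconj : star (inner A x y) * inner A x x * inner A x y
      ≤ ‖x‖ ^ 2 • (star (inner A x y) * inner A x y) := by
    rw [norm_sq_eq_norm_inner_self A]
    exact CStarAlgebra.star_left_conjugate_le_norm_smul (star_inner (A := A) x x)
  rw [← smul_le_smul_iff_of_pos_left hr, ← sub_nonneg]
  convert add_nonneg hw (sub_nonneg.2 hconj) using 1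
  abel

end CStarModuleOld

open CStarModuleOld Finset

theorem stmt_9 {A E : Type*} [NonUnitalCStarAlgebra A] [PartialOrder A] [StarOrderedRing A]
    [AddCommGroup E] [Module ℂ E] [SMul Aᵐᵒᵖ E] [Norm E] [CStarModuleOld A E]
    {n : ℕ} (hn : 0 < n) (x : E) (y : Fin n → E) (a : Fin n → A) :
    star (∑ i, a i * (inner A (y i) x : A)) * (∑ i, a i * (inner A (y i) x : A)) ≤
      ((∑ i, ‖a i‖ ^ 2) *
        ((Finset.univ.sup' ⟨⟨0, hn⟩, Finset.mem_univ _⟩ fun i => ‖y i‖ ^ 2) +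
          Real.sqrt (∑ i, ∑ j, if i = j then 0 else ‖(inner A (y i) (y j) : A)‖ ^ 2))) •
        (inner A x x : A) := by
  set z : E := ∑ i, y i <• star (a i)
  have hzx : inner A z x = ∑ i, a i * inner A (y i) x := by
    simp only [z, inner_sum_left, inner_op_smul_left, star_star]
  have hzz : inner A z z = ∑ i, ∑ j, a i * inner A (y i) (y j) * star (a j) := by
    simp only [z, inner_sum_left, inner_sum_right, inner_op_smul_left, inner_op_smul_right,
      star_star, sum_mul, mul_assoc]
    exact sum_comm
  have hdiag (i : Fin n) : ‖inner A (y i) (y i)‖ ≤ univ.sup' _ fun i => ‖y i‖ ^ 2 :=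
    norm_sq_eq_norm_inner_self A (y i) ▸ le_sup' (fun i => ‖y i‖ ^ 2) (mem_univ i)
  rw [← hzx]
  calc star (inner A z x) * inner A z x ≤ ‖z‖ ^ 2 • inner A x x := star_inner_mul_inner_le
    _ ≤ _ := by
      refine smul_le_smul_of_nonneg_right ?_ inner_self_nonneg
      rw [norm_sq_eq_norm_inner_self A, hzz]
      exact norm_sum_sum_mul_mul_star_le_of_diag_le a _ hdiag
end

section
/- Let X be a Hilbert C*-module over a C*-algebra A and x, y₁,…,yₙ ∈ X. Then (∑ᵢ ⟨yᵢ,x⟩*⟨yᵢ,x⟩)² ≤ (∑ᵢ ‖⟨yᵢ,x⟩‖²) · [max_{1≤i≤n} ‖yᵢ‖² + (∑_{i≠j} ‖⟨yᵢ,yⱼ⟩‖²)^{1/2}] · ⟨x,x⟩, as an inequality in the order of A. -/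
open scoped RightActions

/-- The class `CStarModule` as it stood in Mathlib of December 2024 (right `A`-module via
`Aᵐᵒᵖ`, inner product `A`-linear on the right); Mathlib's current `CStarModule` uses a left
action `[SMul A E]` with different axioms. -/
class OldCStarModule (A E : Type*) [NonUnitalSemiring A] [StarRing A] [Module ℂ A]
    [AddCommGroup E] [Module ℂ E] [PartialOrder A] [SMul Aᵐᵒᵖ E] [Norm A] [Norm E]
    extends Inner A E where
  inner_add_right {x} {y} {z} : inner x (y + z) = inner x y + inner x z
  inner_self_nonneg {x} : 0 ≤ inner x x
  inner_self {x} : inner x x = 0 ↔ x = 0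
  inner_op_smul_right {a : A} {x y : E} : inner x (y <• a) = inner x y * a
  inner_smul_right_complex {z : ℂ} {x} {y} : inner x (z • y) = z • inner x y
  star_inner x y : star (inner x y) = inner y x
  norm_eq_sqrt_norm_inner_self x : ‖x‖ = Real.sqrt ‖inner x x‖

/-!
With `aᵢ = ⟪yᵢ, x⟫` and `z = ∑ᵢ yᵢ aᵢ` we have `⟪x, z⟫ = ∑ᵢ aᵢ* aᵢ`, so the module Cauchy–Schwarz
inequality `⟪x, z⟫ ⟪z, x⟫ ≤ ‖z‖² ⟪x, x⟫` reduces the claim to a bound on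
`‖z‖² = ‖∑ᵢⱼ aᵢ* ⟪yᵢ, yⱼ⟫ aⱼ‖ ≤ ∑ᵢⱼ ‖aᵢ‖ ‖⟪yᵢ, yⱼ⟫‖ ‖aⱼ‖`. The diagonal of this real quadratic form
is at most `max ‖yᵢ‖² · ∑ ‖aᵢ‖²`; the off-diagonal part is handled by the Cauchy–Schwarz
inequality in `ℝ` over the pairs `i ≠ j`, using `∑_{i ≠ j} ‖aᵢ‖² ‖aⱼ‖² ≤ (∑ ‖aᵢ‖²)²`.
-/

open Finset

section Sums

variable {ι M : Type*} [Fintype ι] [DecidableEq ι] [AddCommMonoid M]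

lemma Finset.sum_sum_ite_eq_sum_offDiag (f : ι → ι → M) :
    ∑ i, ∑ j, (if i = j then 0 else f i j) = ∑ p ∈ univ.offDiag, f p.1 p.2 := by
  rw [← Fintype.sum_prod_type' (f := fun i j => if i = j then 0 else f i j), sum_ite,
    sum_const_zero, zero_add]
  congr 1
  ext p
  simp [mem_offDiag]

lemma Finset.sum_sum_eq_sum_diag_add_sum_offDiag (f : ι → ι → M) :
    ∑ i, ∑ j, f i j = ∑ i, f i i + ∑ p ∈ univ.offDiag, f p.1 p.2 := by
  rw [← sum_sum_ite_eq_sum_offDiag, ← sum_add_distrib]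
  refine sum_congr rfl fun i _ => ?_
  rw [sum_ite, sum_const_zero, zero_add]
  simp only [← ne_eq, filter_ne, add_sum_erase _ _ (mem_univ i)]

end Sums

lemma Real.sum_sum_mul_mul_le_s10 {ι : Type*} [Fintype ι] [DecidableEq ι] (u : ι → ℝ)
    (c : ι → ι → ℝ) {M : ℝ} (hM : ∀ i, c i i ≤ M) :
    ∑ i, ∑ j, u i * c i j * u j ≤
      (∑ i, u i ^ 2) * (M + √(∑ p ∈ univ.offDiag, c p.1 p.2 ^ 2)) := by
  have hdiag : ∑ i, u i * c i i * u i ≤ (∑ i, u i ^ 2) * M := by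
    rw [sum_mul]
    exact sum_le_sum fun i _ => by nlinarith [hM i, sq_nonneg (u i)]
  have hoff : ∑ p ∈ univ.offDiag, u p.1 * c p.1 p.2 * u p.2 ≤
      (∑ i, u i ^ 2) * √(∑ p ∈ univ.offDiag, c p.1 p.2 ^ 2) := by
    have hsq : ∑ p ∈ univ.offDiag, (u p.1 * u p.2) ^ 2 ≤ (∑ i, u i ^ 2) ^ 2 := calc
      _ ≤ ∑ p : ι × ι, (u p.1 * u p.2) ^ 2 :=
        sum_le_sum_of_subset_of_nonneg (subset_univ _) fun _ _ _ => sq_nonneg _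
      _ = (∑ i, u i ^ 2) ^ 2 := by
        rw [Fintype.sum_prod_type, sq (∑ i, _), sum_mul_sum]
        simp only [mul_pow]
    calc _ = ∑ p ∈ univ.offDiag, (u p.1 * u p.2) * c p.1 p.2 :=
          sum_congr rfl fun _ _ => by ring
      _ ≤ √(∑ p ∈ univ.offDiag, (u p.1 * u p.2) ^ 2) * √(∑ p ∈ univ.offDiag, c p.1 p.2 ^ 2) :=
          Real.sum_mul_le_sqrt_mul_sqrt _ _ _
      _ ≤ _ := by
          gcongr
          exact (Real.sqrt_le_sqrt hsq).trans_eq (Real.sqrt_sq (by positivity))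
  rw [sum_sum_eq_sum_diag_add_sum_offDiag, mul_add]
  exact add_le_add hdiag hoff

lemma norm_sum_sum_star_mul_mul_le {ι R : Type*} [Fintype ι] [NonUnitalSeminormedRing R]
    [StarRing R] [NormedStarGroup R] (a : ι → R) (g : ι → ι → R) :
    ‖∑ i, ∑ j, star (a i) * g i j * a j‖ ≤ ∑ i, ∑ j, ‖a i‖ * ‖g i j‖ * ‖a j‖ := by
  refine (norm_sum_le _ _).trans (sum_le_sum fun i _ => (norm_sum_le _ _).trans
    (sum_le_sum fun j _ => ?_))
  simpa only [norm_star] using norm_mul₃_le (a := star (a i)) (b := g i j) (c := a j)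

namespace OldCStarModule

section Algebraic

variable {A E : Type*} [NonUnitalRing A] [StarRing A] [Module ℂ A] [PartialOrder A] [Norm A]
  [AddCommGroup E] [Module ℂ E] [SMul Aᵐᵒᵖ E] [Norm E] [OldCStarModule A E]

lemma inner_op_smul_left {a : A} {x y : E} : inner A (x <• a) y = star a * inner A x y := by
  rw [← star_inner (A := A) y, inner_op_smul_right, star_mul, star_inner]

lemma inner_smul_left_complex [StarModule ℂ A] {z : ℂ} {x y : E} :
    inner A (z • x) y = star z • inner A x y := by
  rw [← star_inner (A := A) y, inner_smul_right_complex, star_smul, star_inner]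

variable (A) in
def innerAddHom (x : E) : E →+ A :=
  AddMonoidHom.mk' (inner A x) fun _ _ => inner_add_right

lemma inner_zero_right {x : E} : inner A x (0 : E) = 0 :=
  map_zero (innerAddHom A x)

lemma inner_sub_right {x y z : E} : inner A x (y - z) = inner A x y - inner A x z :=
  map_sub (innerAddHom A x) y z

lemma inner_sub_left {x y z : E} : inner A (x - y) z = inner A x z - inner A y z := by
  rw [← star_inner (A := A) z, inner_sub_right, star_sub, star_inner, star_inner]

lemma inner_sum_right {ι : Type*} (s : Finset ι) (x : E) (y : ι → E) :
    inner A x (∑ i ∈ s, y i) = ∑ i ∈ s, inner A x (y i) :=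
  map_sum (innerAddHom A x) y s

lemma inner_sum_left {ι : Type*} (s : Finset ι) (x : ι → E) (y : E) :
    inner A (∑ i ∈ s, x i) y = ∑ i ∈ s, inner A (x i) y := by
  simp only [← star_inner (A := A) y, inner_sum_right, star_sum]

lemma inner_sum_op_smul_right {ι : Type*} (s : Finset ι) (x : E) (y : ι → E) (a : ι → A) :
    inner A x (∑ i ∈ s, y i <• a i) = ∑ i ∈ s, inner A x (y i) * a i := by
  simp only [inner_sum_right, inner_op_smul_right]

lemma inner_sum_op_smul_self {ι : Type*} (s : Finset ι) (y : ι → E) (a : ι → A) :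
    inner A (∑ i ∈ s, y i <• a i) (∑ i ∈ s, y i <• a i) =
      ∑ i ∈ s, ∑ j ∈ s, star (a i) * inner A (y i) (y j) * a j := by
  rw [inner_sum_left]
  simp only [inner_op_smul_left, inner_sum_op_smul_right, mul_assoc]

end Algebraic

variable {A E : Type*} [NonUnitalCStarAlgebra A] [PartialOrder A]
  [AddCommGroup E] [Module ℂ E] [SMul Aᵐᵒᵖ E] [Norm E] [OldCStarModule A E]

variable (A) in
lemma norm_sq_eq_norm_inner_self (x : E) : ‖x‖ ^ 2 = ‖inner A x x‖ := by
  rw [norm_eq_sqrt_norm_inner_self (A := A), Real.sq_sqrt (norm_nonneg _)]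

lemma norm_sum_op_smul_sq_le {ι : Type*} [Fintype ι] [DecidableEq ι] (y : ι → E) (a : ι → A)
    {M : ℝ} (hM : ∀ i, ‖y i‖ ^ 2 ≤ M) :
    ‖∑ i, y i <• a i‖ ^ 2 ≤
      (∑ i, ‖a i‖ ^ 2) * (M + √(∑ p ∈ univ.offDiag, ‖inner A (y p.1) (y p.2)‖ ^ 2)) := by
  calc ‖∑ i, y i <• a i‖ ^ 2
      = ‖∑ i, ∑ j, star (a i) * inner A (y i) (y j) * a j‖ := by
        rw [norm_sq_eq_norm_inner_self A, inner_sum_op_smul_self]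
    _ ≤ ∑ i, ∑ j, ‖a i‖ * ‖inner A (y i) (y j)‖ * ‖a j‖ := norm_sum_sum_star_mul_mul_le _ _
    _ ≤ _ := Real.sum_sum_mul_mul_le_s10 _ _ fun i => (norm_sq_eq_norm_inner_self A (y i)).symm ▸ hM i

variable [StarOrderedRing A]

lemma inner_mul_inner_swap_le (x y : E) :
    inner A y x * inner A x y ≤ ‖x‖ ^ 2 • inner A y y := by
  rcases eq_or_ne x 0 with rfl | hx
  · rw [inner_zero_right, zero_mul]
    exact smul_nonneg (sq_nonneg _) inner_self_nonneg
  set r := ‖x‖ ^ 2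
  have hr_def : r = ‖inner A x x‖ := norm_sq_eq_norm_inner_self A x
  have hr : 0 < r := by
    rw [hr_def]
    exact norm_pos_iff.2 fun h => hx (inner_self.1 h)
  set a := inner A x y
  have hstar : star a = inner A y x := star_inner x y
  have hreal (b : A) : (r : ℂ) • b = r • b := (RCLike.real_smul_eq_coe_smul r b).symm
  have hexpand : (0 : A) ≤
      star a * inner A x x * a - r • (star a * a) - r • (star a * a) + r • r • inner A y y := by
    calc (0 : A) ≤ inner A (x <• a - (r : ℂ) • y) (x <• a - (r : ℂ) • y) := inner_self_nonneg
      _ = _ := by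
        simp only [inner_sub_left, inner_sub_right, inner_op_smul_left, inner_op_smul_right,
          inner_smul_left_complex, inner_smul_right_complex, Complex.star_def,
          Complex.conj_ofReal, hreal, hstar, sub_mul, smul_mul_assoc, smul_sub]
        abel
  have hconj : star a * inner A x x * a ≤ r • (star a * a) := by
    rw [hr_def]
    exact CStarAlgebra.star_left_conjugate_le_norm_smul (star_inner x x)
  rw [← hstar, ← smul_le_smul_iff_of_pos_left hr]
  refine sub_nonneg.1 ?_
  convert add_nonneg hexpand (sub_nonneg.2 hconj) using 1
  abel

end OldCStarModule

open OldCStarModule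

theorem stmt_10 {A E : Type*} [NonUnitalCStarAlgebra A] [PartialOrder A] [StarOrderedRing A]
    [AddCommGroup E] [Module ℂ E] [SMul Aᵐᵒᵖ E] [Norm E] [OldCStarModule A E]
    {n : ℕ} (hn : 0 < n) (x : E) (y : Fin n → E) :
    (∑ i, star (inner A (y i) x : A) * (inner A (y i) x : A)) *
        (∑ i, star (inner A (y i) x : A) * (inner A (y i) x : A)) ≤
      ((∑ i, ‖(inner A (y i) x : A)‖ ^ 2) *
        ((Finset.univ.sup' ⟨⟨0, hn⟩, Finset.mem_univ _⟩ fun i => ‖y i‖ ^ 2) +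
          Real.sqrt (∑ i, ∑ j, if i = j then 0 else ‖(inner A (y i) (y j) : A)‖ ^ 2))) •
        (inner A x x : A) := by
  set a : Fin n → A := fun i => inner A (y i) x
  set z : E := ∑ i, y i <• a i
  have hxz : inner A x z = ∑ i, star (a i) * a i := by
    simp only [z, inner_sum_op_smul_right, a, star_inner]
  have hzx : inner A z x = ∑ i, star (a i) * a i := by
    rw [← star_inner (A := A) x, hxz, star_sum]
    simp only [star_mul, star_star]
  rw [sum_sum_ite_eq_sum_offDiag fun i j => ‖inner A (y i) (y j)‖ ^ 2]
  calc _ = inner A x z * inner A z x := by rw [hxz, hzx]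
    _ ≤ ‖z‖ ^ 2 • inner A x x := inner_mul_inner_swap_le z x
    _ ≤ _ := smul_le_smul_of_nonneg_right
      (norm_sum_op_smul_sq_le y a fun i => le_sup' (fun i => ‖y i‖ ^ 2) (mem_univ i))
      inner_self_nonneg
end

section
/- In a C*-algebra A, for every element c, the self-adjoint element Re(c) = (c + c*)/2 satisfies |Re(c)| ≤ ((c*c + cc*)/2)^{1/2} in the order of A, where |x| = (x*x)^{1/2}. -/
/-!
Writing `s = (c + c⋆)/2` and `d = (c - c⋆)/2`, one has `(c⋆c + cc⋆)/2 = s⋆s + d⋆d ≥ s⋆s`,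
and the square root is operator monotone.
-/

lemma half_smul_star_mul_add_mul_star {A : Type*} [Ring A] [StarRing A] [Algebra ℝ A]
    [StarModule ℝ A] (c : A) :
    (1 / 2 : ℝ) • (star c * c + c * star c) =
      star ((1 / 2 : ℝ) • (c + star c)) * ((1 / 2 : ℝ) • (c + star c)) +
        star ((1 / 2 : ℝ) • (c - star c)) * ((1 / 2 : ℝ) • (c - star c)) := by
  simp only [star_smul, star_add, star_sub, star_star, star_trivial, smul_mul_smul_comm,
    mul_add, add_mul, sub_mul, mul_sub, smul_add, smul_sub]
  module

theorem stmt_11 {A : Type*} [CStarAlgebra A] [PartialOrder A] [StarOrderedRing A] (c : A) :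
    CFC.sqrt (star ((1 / 2 : ℝ) • (c + star c)) * ((1 / 2 : ℝ) • (c + star c))) ≤
      CFC.sqrt ((1 / 2 : ℝ) • (star c * c + c * star c)) := by
  rw [half_smul_star_mul_add_mul_star]
  exact CFC.sqrt_le_sqrt _ _ (le_add_of_nonneg_right (star_mul_self_nonneg _))
end
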